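/- (Quantitative maximum principle) Let N ≥ 3 be odd, σ ∈ (2/N², 1), k ≥ 0. Suppose w : ℝ² → [0,∞) is C² with Δw ≥ f, where 0 ≤ f ≤ 1 everywhere and for every x ∈ ℝ² and i ∈ {0,...,k}, (1/N^{2i})∫_{Q_{N^i}(x)} f ≥ σ^i/2. Then there is a universal constant C > 0 such that for every x ∈ ℝ², w(x) ≤ max_{∂Q_{N^{k+1}}(x)} w − C·σ^k·N^{2k+2}. -/

import Mathlib

open MeasureTheory

noncomputable def pdx (f : ℝ × ℝ → ℝ) (p : ℝ × ℝ) : ℝ := fderiv ℝ f p (1, 0)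
noncomputable def pdy (f : ℝ × ℝ → ℝ) (p : ℝ × ℝ) : ℝ := fderiv ℝ f p (0, 1)
noncomputable def lap (f : ℝ × ℝ → ℝ) (p : ℝ × ℝ) : ℝ :=
  pdx (pdx f) p + pdy (pdy f) p

/-- The axis-parallel square of side `r` centered at `x`. -/
def sqQ (r : ℝ) (x : ℝ × ℝ) : Set (ℝ × ℝ) :=
  Set.Icc (x.1 - r / 2) (x.1 + r / 2) ×ˢ Set.Icc (x.2 - r / 2) (x.2 + r / 2)

/-!
Average `w` over the Euclidean disc of radius `L = N^k`: `U y = ∫_{|z| < L} w (y + z) dz`. Then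
`ΔU p = ∫_{|z| < L} Δw (p + z) dz ≥ ∫_{Q_L(p)} f ≥ σ^k L² / 2`, so `U - c |· - x|²` with
`c = σ^k L² / 16` is strictly subharmonic and attains its maximum over `Q_ρ(x)`,
`ρ = N^{k+1} - 2L`, at a boundary point `y`, where `|y - x|² ≥ ρ² / 4`. The sub-mean value
property gives `U x ≥ π L² w x`, and the weak maximum principle on `Q_{N^{k+1}}(x) ⊇ y + disc`
gives `U y ≤ π L² max_{∂Q_{N^{k+1}}(x)} w`. Comparing, `π L² w x ≤ π L² max w - c ρ² / 4`, and
`ρ ≥ N^{k+1} / 3` because `N ≥ 3`.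
-/

open Real Set Filter Topology Bornology

theorem IsLocalMax.deriv_deriv_nonpos {f : ℝ → ℝ} {a : ℝ} (h : IsLocalMax f a)
    (hf : ContinuousAt f a) : deriv (deriv f) a ≤ 0 := by
  by_contra! hpos
  have hmin : IsLocalMin f a := isLocalMin_of_deriv_deriv_pos hpos h.deriv_eq_zero hf
  have hconst : f =ᶠ[𝓝 a] fun _ => f a := by
    filter_upwards [h, hmin] with x h₁ h₂ using le_antisymm h₁ h₂
  have : deriv (deriv f) a = 0 := by simp [hconst.deriv.deriv_eq]
  linarith

lemma hasDerivAt_add_smul {E : Type*} [NormedAddCommGroup E] [NormedSpace ℝ E] (p v : E) (t : ℝ) :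
    HasDerivAt (fun s : ℝ => p + s • v) v t := by
  simpa using ((hasDerivAt_id t).smul_const v).const_add p

lemma deriv_deriv_comp_add_smul {V : ℝ × ℝ → ℝ} (hV : Differentiable ℝ V) {p v : ℝ × ℝ}
    (hDv : DifferentiableAt ℝ (fun q => fderiv ℝ V q v) p) :
    deriv (deriv fun t : ℝ => V (p + t • v)) 0 = fderiv ℝ (fun q => fderiv ℝ V q v) p v := by
  have hfirst : deriv (fun t : ℝ => V (p + t • v)) = fun t => fderiv ℝ V (p + t • v) v := by
    funext t
    exact ((hV _).hasFDerivAt.comp_hasDerivAt t (hasDerivAt_add_smul p v t)).deriv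
  rw [hfirst]
  have hDv' : DifferentiableAt ℝ (fun q => fderiv ℝ V q v) (p + (0 : ℝ) • v) := by simpa using hDv
  simpa [Function.comp_def] using
    (hDv'.hasFDerivAt.comp_hasDerivAt 0 (hasDerivAt_add_smul p v 0)).deriv

structure LapDifferentiable (V : ℝ × ℝ → ℝ) : Prop where
  differentiable : Differentiable ℝ V
  differentiable_pdx : Differentiable ℝ (pdx V)
  differentiable_pdy : Differentiable ℝ (pdy V)

theorem IsLocalMax.lap_nonpos {V : ℝ × ℝ → ℝ} {p : ℝ × ℝ} (h : IsLocalMax V p)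
    (hV : LapDifferentiable V) : lap V p ≤ 0 := by
  have hdir : ∀ v : ℝ × ℝ, DifferentiableAt ℝ (fun q => fderiv ℝ V q v) p →
      fderiv ℝ (fun q => fderiv ℝ V q v) p v ≤ 0 := by
    intro v hv
    have hline : Continuous fun t : ℝ => p + t • v := by fun_prop
    have hmax : IsLocalMax (fun t : ℝ => V (p + t • v)) 0 :=
      IsLocalMax.comp_continuous (g := fun t : ℝ => p + t • v) (by simpa using h)
        hline.continuousAt
    rw [← deriv_deriv_comp_add_smul hV.differentiable hv]
    exact hmax.deriv_deriv_nonpos (hV.differentiable.continuous.comp hline).continuousAt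
  exact add_nonpos (hdir _ (hV.differentiable_pdx p)) (hdir _ (hV.differentiable_pdy p))

theorem IsCompact.exists_isMaxOn_mem_frontier {K : Set (ℝ × ℝ)} (hK : IsCompact K)
    (hne : K.Nonempty) {V : ℝ × ℝ → ℝ} (hV : LapDifferentiable V)
    (hlap : ∀ p ∈ interior K, 0 < lap V p) : ∃ y ∈ frontier K, IsMaxOn V K y := by
  obtain ⟨y, hyK, hmax⟩ := hK.exists_isMaxOn hne hV.differentiable.continuous.continuousOn
  refine ⟨y, ?_, hmax⟩
  rw [hK.isClosed.frontier_eq]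
  refine ⟨hyK, fun hyint => ?_⟩
  have := (hmax.isLocalMax (mem_interior_iff_mem_nhds.1 hyint)).lap_nonpos hV
  linarith [hlap y hyint]

lemma pdx_add {f g : ℝ × ℝ → ℝ} (hf : Differentiable ℝ f) (hg : Differentiable ℝ g) :
    pdx (f + g) = pdx f + pdx g := by
  funext p
  simp [pdx, fderiv_add (hf p) (hg p)]

lemma pdy_add {f g : ℝ × ℝ → ℝ} (hf : Differentiable ℝ f) (hg : Differentiable ℝ g) :
    pdy (f + g) = pdy f + pdy g := by
  funext p
  simp [pdy, fderiv_add (hf p) (hg p)]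

lemma pdx_const_smul (c : ℝ) (f : ℝ × ℝ → ℝ) : pdx (c • f) = c • pdx f := by
  funext p
  simp [pdx, fderiv_const_smul_field]

lemma pdy_const_smul (c : ℝ) (f : ℝ × ℝ → ℝ) : pdy (c • f) = c • pdy f := by
  funext p
  simp [pdy, fderiv_const_smul_field]

namespace LapDifferentiable

variable {f g : ℝ × ℝ → ℝ}

lemma add_smul (hf : LapDifferentiable f) (hg : LapDifferentiable g) (c : ℝ) :
    LapDifferentiable (f + c • g) where
  differentiable := hf.1.add (hg.1.const_smul c)
  differentiable_pdx := by
    rw [pdx_add hf.1 (hg.1.const_smul c), pdx_const_smul]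
    exact hf.2.add (hg.2.const_smul c)
  differentiable_pdy := by
    rw [pdy_add hf.1 (hg.1.const_smul c), pdy_const_smul]
    exact hf.3.add (hg.3.const_smul c)

lemma lap_add_smul (hf : LapDifferentiable f) (hg : LapDifferentiable g) (c : ℝ) :
    lap (f + c • g) = lap f + c • lap g := by
  funext p
  simp only [lap, pdx_add hf.1 (hg.1.const_smul c), pdx_const_smul,
    pdx_add hf.2 (hg.2.const_smul c), pdy_add hf.1 (hg.1.const_smul c), pdy_const_smul,
    pdy_add hf.3 (hg.3.const_smul c), Pi.add_apply, Pi.smul_apply, smul_eq_mul]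
  ring

end LapDifferentiable

section ContDiff

variable {w : ℝ × ℝ → ℝ}

lemma contDiff_pdx (hw : ContDiff ℝ 2 w) : ContDiff ℝ 1 (pdx w) :=
  (hw.fderiv_right (m := 1) (by norm_num)).clm_apply contDiff_const

lemma contDiff_pdy (hw : ContDiff ℝ 2 w) : ContDiff ℝ 1 (pdy w) :=
  (hw.fderiv_right (m := 1) (by norm_num)).clm_apply contDiff_const

lemma continuous_pdx_pdx (hw : ContDiff ℝ 2 w) : Continuous (pdx (pdx w)) :=
  ((contDiff_pdx hw).continuous_fderiv one_ne_zero).clm_apply continuous_const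

lemma continuous_pdy_pdy (hw : ContDiff ℝ 2 w) : Continuous (pdy (pdy w)) :=
  ((contDiff_pdy hw).continuous_fderiv one_ne_zero).clm_apply continuous_const

lemma continuous_lap (hw : ContDiff ℝ 2 w) : Continuous (lap w) :=
  (continuous_pdx_pdx hw).add (continuous_pdy_pdy hw)

theorem ContDiff.lapDifferentiable (hw : ContDiff ℝ 2 w) : LapDifferentiable w where
  differentiable := hw.differentiable (by norm_num)
  differentiable_pdx := (contDiff_pdx hw).differentiable one_ne_zero
  differentiable_pdy := (contDiff_pdy hw).differentiable one_ne_zero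

end ContDiff

def sqDist (x p : ℝ × ℝ) : ℝ := (p.1 - x.1) ^ 2 + (p.2 - x.2) ^ 2

lemma sqDist_nonneg (x p : ℝ × ℝ) : 0 ≤ sqDist x p := by
  unfold sqDist; positivity

lemma hasFDerivAt_sqDist (x p : ℝ × ℝ) :
    HasFDerivAt (sqDist x) ((2 * (p.1 - x.1)) • ContinuousLinearMap.fst ℝ ℝ ℝ
      + (2 * (p.2 - x.2)) • ContinuousLinearMap.snd ℝ ℝ ℝ) p := by
  refine ((((hasFDerivAt_fst (𝕜 := ℝ) (p := p)).sub_const x.1).pow 2).fun_add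
    (((hasFDerivAt_snd (𝕜 := ℝ) (p := p)).sub_const x.2).pow 2)).congr_fderiv ?_
  ext <;> simp

lemma pdx_sqDist (x : ℝ × ℝ) : pdx (sqDist x) = fun p => 2 * (p.1 - x.1) := by
  funext p
  simp [pdx, (hasFDerivAt_sqDist x p).fderiv]

lemma pdy_sqDist (x : ℝ × ℝ) : pdy (sqDist x) = fun p => 2 * (p.2 - x.2) := by
  funext p
  simp [pdy, (hasFDerivAt_sqDist x p).fderiv]

lemma contDiff_sqDist (x : ℝ × ℝ) : ContDiff ℝ 2 (sqDist x) := by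
  unfold sqDist; fun_prop

lemma lap_sqDist (x p : ℝ × ℝ) : lap (sqDist x) p = 4 := by
  have hx : HasFDerivAt (fun p : ℝ × ℝ => 2 * (p.1 - x.1))
      ((2 : ℝ) • ContinuousLinearMap.fst ℝ ℝ ℝ) p :=
    ((hasFDerivAt_fst (𝕜 := ℝ) (p := p)).sub_const x.1).const_mul 2
  have hy : HasFDerivAt (fun p : ℝ × ℝ => 2 * (p.2 - x.2))
      ((2 : ℝ) • ContinuousLinearMap.snd ℝ ℝ ℝ) p :=
    ((hasFDerivAt_snd (𝕜 := ℝ) (p := p)).sub_const x.2).const_mul 2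
  simp only [lap, pdx_sqDist, pdy_sqDist]
  simp [pdx, pdy, hx.fderiv, hy.fderiv]
  norm_num

theorem IsCompact.le_sSup_image_frontier {K : Set (ℝ × ℝ)} (hK : IsCompact K)
    {w : ℝ × ℝ → ℝ} (hw : LapDifferentiable w) (hlap : ∀ p ∈ interior K, 0 ≤ lap w p)
    {q : ℝ × ℝ} (hq : q ∈ K) : w q ≤ sSup (w '' frontier K) := by
  have hfr : frontier K ⊆ K := hK.isClosed.frontier_subset
  have hbdd : BddAbove (w '' frontier K) :=
    ((hK.of_isClosed_subset isClosed_frontier hfr).image hw.differentiable.continuous).bddAbove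
  obtain ⟨B, hB⟩ := hK.exists_bound_of_continuousOn (contDiff_sqDist 0).continuous.continuousOn
  have hB0 : 0 ≤ B := (norm_nonneg _).trans (hB q hq)
  -- perturb by `ε • sqDist 0` to make the Laplacian strictly positive, then let `ε → 0`
  refine le_of_forall_pos_le_add fun δ hδ => ?_
  set ε := δ / (B + 1)
  have hε : 0 < ε := by positivity
  have hV := hw.add_smul (contDiff_sqDist 0).lapDifferentiable ε
  obtain ⟨y, hyfr, hymax⟩ := hK.exists_isMaxOn_mem_frontier ⟨q, hq⟩ hV fun p hp => by
    rw [hw.lap_add_smul (contDiff_sqDist 0).lapDifferentiable ε]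
    simp only [Pi.add_apply, Pi.smul_apply, lap_sqDist, smul_eq_mul]
    linarith [hlap p hp]
  have hqy : w q + ε * sqDist 0 q ≤ w y + ε * sqDist 0 y := hymax hq
  have hy : w y ≤ sSup (w '' frontier K) := le_csSup hbdd (mem_image_of_mem w hyfr)
  have hεB : ε * sqDist 0 y ≤ δ := by
    calc ε * sqDist 0 y ≤ ε * (B + 1) := by
          gcongr
          linarith [Real.norm_of_nonneg (sqDist_nonneg 0 y) ▸ hB y (hfr hyfr)]
      _ = δ := div_mul_cancel₀ δ (by positivity)
  nlinarith [sqDist_nonneg 0 q]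

lemma sq_le_sqDist_of_mem_frontier_sqQ {ρ : ℝ} (hρ : 0 ≤ ρ) {x y : ℝ × ℝ}
    (hy : y ∈ frontier (sqQ ρ x)) : (ρ / 2) ^ 2 ≤ sqDist x y := by
  have hI : ∀ a : ℝ, a - ρ / 2 ≤ a + ρ / 2 := fun a => by linarith
  rw [sqQ, frontier_prod_eq, frontier_Icc (hI _), frontier_Icc (hI _)] at hy
  unfold sqDist
  rcases hy with ⟨-, h⟩ | ⟨h, -⟩
  · rcases h with h | h <;> nlinarith [sq_nonneg (y.1 - x.1), show y.2 = _ from h]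
  · rcases h with h | h <;> nlinarith [sq_nonneg (y.2 - x.2), show y.1 = _ from h]

section ParametricIntegral

lemma Continuous.integrableOn_of_isCompact_closure {α E : Type*} [TopologicalSpace α] [T2Space α]
    [MeasurableSpace α] [OpensMeasurableSpace α] {μ : Measure α} [IsFiniteMeasureOnCompacts μ]
    [NormedAddCommGroup E] {s : Set α} {f : α → E} (hf : Continuous f)
    (hs : IsCompact (closure s)) : IntegrableOn f s μ :=
  (hf.continuousOn.integrableOn_compact hs).mono_set subset_closure

variable {α E : Type*} [TopologicalSpace α] [T2Space α] [SecondCountableTopology α]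
  [MeasurableSpace α] [OpensMeasurableSpace α] {μ : Measure α} [IsFiniteMeasureOnCompacts μ]
  [NormedAddCommGroup E] [NormedSpace ℝ E] {s : Set α}

theorem hasFDerivAt_setIntegral_of_continuous {H : Type*} [NormedAddCommGroup H]
    [NormedSpace ℝ H] [ProperSpace H] (hs : MeasurableSet s) (hsc : IsCompact (closure s))
    {F : H → α → E} {F' : H → α → H →L[ℝ] E} (hF : Continuous (Function.uncurry F))
    (hF' : Continuous (Function.uncurry F')) (hder : ∀ y z, HasFDerivAt (F · z) (F' y z) y)
    (y₀ : H) : HasFDerivAt (fun y => ∫ z in s, F y z ∂μ) (∫ z in s, F' y₀ z ∂μ) y₀ := by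
  obtain ⟨C, hC⟩ := ((isCompact_closedBall y₀ 1).prod hsc).exists_bound_of_continuousOn
    hF'.continuousOn
  have hint : ∀ y, IntegrableOn (F y) s μ := fun y =>
    (hF.comp (Continuous.prodMk_right y)).integrableOn_of_isCompact_closure hsc
  refine hasFDerivAt_integral_of_dominated_of_fderiv_le (bound := fun _ => C)
    (Metric.closedBall_mem_nhds y₀ one_pos) (.of_forall fun y => (hint y).aestronglyMeasurable)
    (hint y₀) (hF'.comp (Continuous.prodMk_right y₀)).aestronglyMeasurable ?_
    (continuous_const.integrableOn_of_isCompact_closure hsc) (.of_forall fun z y _ => hder y z)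
  filter_upwards [ae_restrict_mem hs] with z hz y hy using hC (y, z) ⟨hy, subset_closure hz⟩

theorem hasDerivAt_setIntegral_of_continuous (hs : MeasurableSet s) (hsc : IsCompact (closure s))
    {F F' : ℝ → α → E} (hF : Continuous (Function.uncurry F))
    (hF' : Continuous (Function.uncurry F')) (hder : ∀ r z, HasDerivAt (F · z) (F' r z) r)
    (r₀ : ℝ) : HasDerivAt (fun r => ∫ z in s, F r z ∂μ) (∫ z in s, F' r₀ z ∂μ) r₀ := by
  obtain ⟨C, hC⟩ := ((isCompact_closedBall r₀ 1).prod hsc).exists_bound_of_continuousOn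
    hF'.continuousOn
  have hint : ∀ r, IntegrableOn (F r) s μ := fun r =>
    (hF.comp (Continuous.prodMk_right r)).integrableOn_of_isCompact_closure hsc
  refine (hasDerivAt_integral_of_dominated_loc_of_deriv_le (bound := fun _ => C)
    (Metric.closedBall_mem_nhds r₀ one_pos) (.of_forall fun r => (hint r).aestronglyMeasurable)
    (hint r₀) (hF'.comp (Continuous.prodMk_right r₀)).aestronglyMeasurable ?_
    (continuous_const.integrableOn_of_isCompact_closure hsc)
    (.of_forall fun z r _ => hder r z)).2
  filter_upwards [ae_restrict_mem hs] with z hz r hr using hC (r, z) ⟨hr, subset_closure hz⟩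

end ParametricIntegral

section TranslateIntegral

lemma Continuous.integrableOn_translate {E : Type*} [NormedAddCommGroup E] {g : ℝ × ℝ → E}
    (hg : Continuous g) {s : Set (ℝ × ℝ)} (hs : IsBounded s) (y : ℝ × ℝ) :
    IntegrableOn (fun z => g (y + z)) s :=
  (hg.comp (continuous_const_add y)).integrableOn_of_isCompact_closure hs.isCompact_closure

variable {E : Type*} [NormedAddCommGroup E] [NormedSpace ℝ E] {s : Set (ℝ × ℝ)}

noncomputable def translateIntegral (s : Set (ℝ × ℝ)) (g : ℝ × ℝ → E) (y : ℝ × ℝ) : E :=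
  ∫ z in s, g (y + z)

lemma hasFDerivAt_translateIntegral {g : ℝ × ℝ → E} (hg : ContDiff ℝ 1 g) (hs : MeasurableSet s)
    (hb : IsBounded s) (y : ℝ × ℝ) :
    HasFDerivAt (translateIntegral s g) (translateIntegral s (fderiv ℝ g) y) y :=
  hasFDerivAt_setIntegral_of_continuous (F := fun y z => g (y + z))
    (F' := fun y z => fderiv ℝ g (y + z)) hs hb.isCompact_closure
    (hg.continuous.comp continuous_add) ((hg.continuous_fderiv one_ne_zero).comp continuous_add)
    (fun y z => ((hg.differentiable one_ne_zero (y + z)).hasFDerivAt.comp y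
      ((hasFDerivAt_id y).add_const z))) y

variable {g : ℝ × ℝ → ℝ}

lemma fderiv_translateIntegral_apply (hg : ContDiff ℝ 1 g) (hs : MeasurableSet s)
    (hb : IsBounded s) (y v : ℝ × ℝ) :
    fderiv ℝ (translateIntegral s g) y v = translateIntegral s (fun q => fderiv ℝ g q v) y := by
  rw [(hasFDerivAt_translateIntegral hg hs hb y).fderiv, translateIntegral,
    ContinuousLinearMap.integral_apply
      ((hg.continuous_fderiv one_ne_zero).integrableOn_translate hb y)]
  rfl

lemma pdx_translateIntegral (hg : ContDiff ℝ 1 g) (hs : MeasurableSet s) (hb : IsBounded s) :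
    pdx (translateIntegral s g) = translateIntegral s (pdx g) :=
  funext fun y => fderiv_translateIntegral_apply hg hs hb y _

lemma pdy_translateIntegral (hg : ContDiff ℝ 1 g) (hs : MeasurableSet s) (hb : IsBounded s) :
    pdy (translateIntegral s g) = translateIntegral s (pdy g) :=
  funext fun y => fderiv_translateIntegral_apply hg hs hb y _

lemma ContDiff.lapDifferentiable_translateIntegral {w : ℝ × ℝ → ℝ} (hw : ContDiff ℝ 2 w)
    (hs : MeasurableSet s) (hb : IsBounded s) : LapDifferentiable (translateIntegral s w) where
  differentiable y := (hasFDerivAt_translateIntegral (hw.of_le one_le_two) hs hb y).differentiableAt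
  differentiable_pdx y := by
    rw [pdx_translateIntegral (hw.of_le one_le_two) hs hb]
    exact (hasFDerivAt_translateIntegral (contDiff_pdx hw) hs hb y).differentiableAt
  differentiable_pdy y := by
    rw [pdy_translateIntegral (hw.of_le one_le_two) hs hb]
    exact (hasFDerivAt_translateIntegral (contDiff_pdy hw) hs hb y).differentiableAt

lemma lap_translateIntegral {w : ℝ × ℝ → ℝ} (hw : ContDiff ℝ 2 w) (hs : MeasurableSet s)
    (hb : IsBounded s) : lap (translateIntegral s w) = translateIntegral s (lap w) := by
  funext y
  simp only [lap, pdx_translateIntegral (hw.of_le one_le_two) hs hb,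
    pdy_translateIntegral (hw.of_le one_le_two) hs hb,
    pdx_translateIntegral (contDiff_pdx hw) hs hb, pdy_translateIntegral (contDiff_pdy hw) hs hb]
  rw [translateIntegral, translateIntegral,
    ← integral_add ((continuous_pdx_pdx hw).integrableOn_translate hb y)
      ((continuous_pdy_pdy hw).integrableOn_translate hb y)]
  rfl

end TranslateIntegral

noncomputable def radialDir (θ : ℝ) : ℝ × ℝ := (cos θ, sin θ)

-- Euclidean: `Metric.ball` in `ℝ × ℝ` is a square, for the sup norm.
def disc (L : ℝ) : Set (ℝ × ℝ) := {p | p.1 ^ 2 + p.2 ^ 2 < L ^ 2}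

lemma isOpen_disc (L : ℝ) : IsOpen (disc L) :=
  isOpen_lt (by fun_prop) continuous_const

lemma measurableSet_disc (L : ℝ) : MeasurableSet (disc L) := (isOpen_disc L).measurableSet

lemma disc_subset_ball (L : ℝ) : disc L ⊆ Metric.ball 0 |L| := by
  intro z hz
  have hz : z.1 ^ 2 + z.2 ^ 2 < L ^ 2 := hz
  rw [mem_ball_zero_iff, Prod.norm_def, max_lt_iff, Real.norm_eq_abs, Real.norm_eq_abs,
    ← sq_lt_sq, ← sq_lt_sq]
  constructor <;> nlinarith [sq_nonneg z.1, sq_nonneg z.2]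

lemma isBounded_disc (L : ℝ) : IsBounded (disc L) :=
  Metric.isBounded_ball.subset (disc_subset_ball L)

lemma smul_radialDir_mem_disc_iff {L r : ℝ} (hL : 0 ≤ L) (hr : 0 ≤ r) (θ : ℝ) :
    r • radialDir θ ∈ disc L ↔ r < L := by
  have h : (r * cos θ) ^ 2 + (r * sin θ) ^ 2 = r ^ 2 := by
    linear_combination r ^ 2 * sin_sq_add_cos_sq θ
  change (r * cos θ) ^ 2 + (r * sin θ) ^ 2 < L ^ 2 ↔ r < L
  rw [h, sq_lt_sq₀ hr hL]

theorem integral_disc_eq_polar {E : Type*} [NormedAddCommGroup E] [NormedSpace ℝ E] {L : ℝ}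
    (hL : 0 ≤ L) {h : ℝ × ℝ → E} (hc : Continuous h) :
    ∫ z in disc L, h z = ∫ r in Ioo 0 L, r • ∫ θ in Ioo (-π) π, h (r • radialDir θ) := by
  set G : ℝ × ℝ → E := fun p => p.1 • h (p.1 • radialDir p.2)
  have hpolar : ∀ p : ℝ × ℝ, polarCoord.symm p = p.1 • radialDir p.2 := fun p => by
    simp [radialDir, polarCoord_symm_apply]
  have hind : EqOn (fun p : ℝ × ℝ => p.1 • (disc L).indicator h (polarCoord.symm p))
      ((Iio L ×ˢ univ).indicator G) polarCoord.target := by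
    rintro ⟨r, θ⟩ ⟨hr, -⟩
    have hr : 0 ≤ r := le_of_lt hr
    by_cases hrL : r < L
    · simp [hpolar, indicator_of_mem ((smul_radialDir_mem_disc_iff hL hr θ).2 hrL), G, hrL]
    · simp [hpolar, indicator_of_notMem (mt (smul_radialDir_mem_disc_iff hL hr θ).1 hrL), G,
        hrL]
  have hG : IntegrableOn G (Ioo 0 L ×ˢ Ioo (-π) π) (volume.prod volume) := by
    rw [← Measure.volume_eq_prod]
    refine Continuous.integrableOn_of_isCompact_closure (by fun_prop [radialDir]) ?_
    exact (Metric.isBounded_Ioo _ _).prod (Metric.isBounded_Ioo _ _) |>.isCompact_closure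
  rw [← integral_indicator (measurableSet_disc L), ← integral_comp_polarCoord_symm,
    setIntegral_congr_fun polarCoord.open_target.measurableSet hind,
    setIntegral_indicator (measurableSet_Iio.prod MeasurableSet.univ), polarCoord_target,
    prod_inter_prod, Ioi_inter_Iio, inter_univ, Measure.volume_eq_prod, setIntegral_prod _ hG]
  simp only [G, integral_smul]

lemma integral_Ioo_mul_const {L : ℝ} (hL : 0 ≤ L) (c : ℝ) :
    ∫ r in Ioo 0 L, r * c = L ^ 2 / 2 * c := by
  rw [← integral_Ioc_eq_integral_Ioo, ← intervalIntegral.integral_of_le hL,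
    intervalIntegral.integral_mul_const, integral_id]
  ring

lemma integral_Ioo_neg_pi_pi_const (c : ℝ) : ∫ _ in Ioo (-π) π, c = 2 * π * c := by
  rw [setIntegral_const, Real.volume_real_Ioo_of_le (by linarith [pi_pos]), smul_eq_mul]
  ring

lemma volume_real_disc {L : ℝ} (hL : 0 ≤ L) : volume.real (disc L) = π * L ^ 2 := by
  have h := integral_disc_eq_polar hL (h := fun _ => (1 : ℝ)) continuous_const
  simp only [setIntegral_const, smul_eq_mul, mul_one] at h
  rw [h, Real.volume_real_Ioo_of_le (by linarith [pi_pos]), integral_Ioo_mul_const hL]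
  ring

noncomputable def angularDir (θ : ℝ) : ℝ × ℝ := (-sin θ, cos θ)

@[fun_prop]
lemma continuous_radialDir : Continuous radialDir :=
  continuous_cos.prodMk continuous_sin

@[fun_prop]
lemma continuous_angularDir : Continuous angularDir :=
  continuous_sin.neg.prodMk continuous_cos

lemma hasDerivAt_radialDir (θ : ℝ) : HasDerivAt radialDir (angularDir θ) θ :=
  (hasDerivAt_cos θ).prodMk (hasDerivAt_sin θ)

lemma hasDerivAt_angularDir (θ : ℝ) : HasDerivAt angularDir (-radialDir θ) θ := by
  show HasDerivAt (fun θ => (-sin θ, cos θ)) _ θ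
  simpa [radialDir] using (hasDerivAt_sin θ).neg.prodMk (hasDerivAt_cos θ)

section SubmeanValue

variable {w : ℝ × ℝ → ℝ}

lemma lap_eq_fderiv_fderiv (hw : ContDiff ℝ 2 w) (p : ℝ × ℝ) :
    lap w p = fderiv ℝ (fderiv ℝ w) p (1, 0) (1, 0) + fderiv ℝ (fderiv ℝ w) p (0, 1) (0, 1) := by
  have hD : DifferentiableAt ℝ (fderiv ℝ w) p :=
    (hw.fderiv_right (m := 1) (by norm_num)).differentiable one_ne_zero p
  have hpd : ∀ v : ℝ × ℝ, fderiv ℝ (fun q => fderiv ℝ w q v) p = 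
      (ContinuousLinearMap.apply ℝ ℝ v).comp (fderiv ℝ (fderiv ℝ w) p) := fun v =>
    ((ContinuousLinearMap.apply ℝ ℝ v).hasFDerivAt.comp p hD.hasFDerivAt).fderiv
  change fderiv ℝ (fun q => fderiv ℝ w q (1, 0)) p (1, 0)
    + fderiv ℝ (fun q => fderiv ℝ w q (0, 1)) p (0, 1) = _
  rw [hpd, hpd]
  rfl

lemma fderiv_fderiv_radialDir_add_angularDir (hw : ContDiff ℝ 2 w) (p : ℝ × ℝ) (θ : ℝ) :
    fderiv ℝ (fderiv ℝ w) p (radialDir θ) (radialDir θ)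
      + fderiv ℝ (fderiv ℝ w) p (angularDir θ) (angularDir θ) = lap w p := by
  have he : radialDir θ = cos θ • ((1 : ℝ), (0 : ℝ)) + sin θ • ((0 : ℝ), (1 : ℝ)) := by
    simp [radialDir]
  have he' : angularDir θ = (-sin θ) • ((1 : ℝ), (0 : ℝ)) + cos θ • ((0 : ℝ), (1 : ℝ)) := by
    simp [angularDir]
  rw [lap_eq_fderiv_fderiv hw, he, he']
  simp only [map_add, map_smul, add_apply, smul_apply,
    smul_eq_mul]
  linear_combination (fderiv ℝ (fderiv ℝ w) p (1, 0) (1, 0)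
    + fderiv ℝ (fderiv ℝ w) p (0, 1) (0, 1)) * sin_sq_add_cos_sq θ

noncomputable def angularIntegral (g : ℝ × ℝ → ℝ) (x : ℝ × ℝ) (r : ℝ) : ℝ :=
  ∫ θ in Ioo (-π) π, g (x + r • radialDir θ)

lemma hasDerivAt_angularIntegral (hw : ContDiff ℝ 1 w) (x : ℝ × ℝ) (r₀ : ℝ) :
    HasDerivAt (angularIntegral w x)
      (∫ θ in Ioo (-π) π, fderiv ℝ w (x + r₀ • radialDir θ) (radialDir θ)) r₀ := by
  have hc := hw.continuous
  have hc' := hw.continuous_fderiv one_ne_zero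
  exact hasDerivAt_setIntegral_of_continuous (F := fun r θ => w (x + r • radialDir θ))
    (F' := fun r θ => fderiv ℝ w (x + r • radialDir θ) (radialDir θ)) measurableSet_Ioo
    (Metric.isBounded_Ioo _ _).isCompact_closure (by fun_prop) (by fun_prop)
    (fun r θ => (hw.differentiable one_ne_zero _).hasFDerivAt.comp_hasDerivAt r
      (hasDerivAt_add_smul x _ r)) r₀

lemma hasDerivAt_integral_fderiv_radialDir (hw : ContDiff ℝ 2 w) (x : ℝ × ℝ) (r₀ : ℝ) :
    HasDerivAt (fun r => ∫ θ in Ioo (-π) π, fderiv ℝ w (x + r • radialDir θ) (radialDir θ))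
      (∫ θ in Ioo (-π) π,
        fderiv ℝ (fderiv ℝ w) (x + r₀ • radialDir θ) (radialDir θ) (radialDir θ)) r₀ := by
  have hD := hw.fderiv_right (m := 1) (by norm_num)
  have hc := hD.continuous
  have hc' := hD.continuous_fderiv one_ne_zero
  refine hasDerivAt_setIntegral_of_continuous
    (F := fun r θ => fderiv ℝ w (x + r • radialDir θ) (radialDir θ))
    (F' := fun r θ => fderiv ℝ (fderiv ℝ w) (x + r • radialDir θ) (radialDir θ) (radialDir θ))
    measurableSet_Ioo (Metric.isBounded_Ioo _ _).isCompact_closure (by fun_prop) (by fun_prop)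
    (fun r θ => ?_) r₀
  simpa using ((hD.differentiable one_ne_zero _).hasFDerivAt.comp_hasDerivAt r
    (hasDerivAt_add_smul x _ r)).clm_apply (hasDerivAt_const r (radialDir θ))

/-- The derivative of the `2π`-periodic function `θ ↦ Dw(x + r e(θ)) (r e'(θ))` has mean zero. -/
lemma integral_deriv_tangential_eq_zero (hw : ContDiff ℝ 2 w) (x : ℝ × ℝ) (r : ℝ) :
    ∫ θ in Ioo (-π) π, (fderiv ℝ (fderiv ℝ w) (x + r • radialDir θ) (r • angularDir θ)
      (r • angularDir θ) + fderiv ℝ w (x + r • radialDir θ) (r • -radialDir θ)) = 0 := by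
  have hD := hw.fderiv_right (m := 1) (by norm_num)
  have hc := hD.continuous
  have hc' := hD.continuous_fderiv one_ne_zero
  have hpath : ∀ θ, HasDerivAt (fun θ => x + r • radialDir θ) (r • angularDir θ) θ := fun θ =>
    ((hasDerivAt_radialDir θ).const_smul r).const_add x
  have hk : ∀ θ, HasDerivAt (fun θ => fderiv ℝ w (x + r • radialDir θ) (r • angularDir θ))
      (fderiv ℝ (fderiv ℝ w) (x + r • radialDir θ) (r • angularDir θ) (r • angularDir θ)
        + fderiv ℝ w (x + r • radialDir θ) (r • -radialDir θ)) θ := fun θ =>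
    ((hD.differentiable one_ne_zero _).hasFDerivAt.comp_hasDerivAt θ (hpath θ)).clm_apply
      ((hasDerivAt_angularDir θ).const_smul r)
  rw [← integral_Ioc_eq_integral_Ioo, ← intervalIntegral.integral_of_le (by linarith [pi_pos]),
    intervalIntegral.integral_eq_sub_of_hasDerivAt (fun θ _ => hk θ)
      (Continuous.intervalIntegrable (by fun_prop) _ _)]
  simp [radialDir, angularDir]

lemma sq_mul_integral_add_mul_integral_nonneg (hw : ContDiff ℝ 2 w)
    (hlap : ∀ p, 0 ≤ lap w p) (x : ℝ × ℝ) (r : ℝ) :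
    0 ≤ r ^ 2 * (∫ θ in Ioo (-π) π,
        fderiv ℝ (fderiv ℝ w) (x + r • radialDir θ) (radialDir θ) (radialDir θ))
      + r * ∫ θ in Ioo (-π) π, fderiv ℝ w (x + r • radialDir θ) (radialDir θ) := by
  have hD := hw.fderiv_right (m := 1) (by norm_num)
  have hc := hD.continuous
  have hc' := hD.continuous_fderiv one_ne_zero
  have hlapc := continuous_lap hw
  have hint : ∀ {f : ℝ → ℝ}, Continuous f → IntegrableOn f (Ioo (-π) π) := fun hf =>
    hf.integrableOn_of_isCompact_closure (Metric.isBounded_Ioo _ _).isCompact_closure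
  -- pointwise: radial part = `r²·Δw` minus the derivative of the tangential term
  have hpoint : ∀ θ, r ^ 2 * fderiv ℝ (fderiv ℝ w) (x + r • radialDir θ) (radialDir θ)
        (radialDir θ) + r * fderiv ℝ w (x + r • radialDir θ) (radialDir θ)
      = r ^ 2 * lap w (x + r • radialDir θ)
        - (fderiv ℝ (fderiv ℝ w) (x + r • radialDir θ) (r • angularDir θ) (r • angularDir θ)
          + fderiv ℝ w (x + r • radialDir θ) (r • -radialDir θ)) := fun θ => by
    simp only [map_smul, map_neg, smul_apply, smul_eq_mul]
    linear_combination r ^ 2 * fderiv_fderiv_radialDir_add_angularDir hw (x + r • radialDir θ) θ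
  rw [← integral_const_mul, ← integral_const_mul, ← integral_add (hint (by fun_prop))
    (hint (by fun_prop)), setIntegral_congr_fun measurableSet_Ioo fun θ _ => hpoint θ,
    integral_sub (hint (by fun_prop)) (hint (by fun_prop)), integral_deriv_tangential_eq_zero hw,
    sub_zero, integral_const_mul]
  exact mul_nonneg (sq_nonneg r) (setIntegral_nonneg measurableSet_Ioo fun θ _ => hlap _)

theorem monotoneOn_angularIntegral (hw : ContDiff ℝ 2 w) (hlap : ∀ p, 0 ≤ lap w p)
    (x : ℝ × ℝ) : MonotoneOn (angularIntegral w x) (Ici 0) := by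
  set A₁ : ℝ → ℝ := fun r => ∫ θ in Ioo (-π) π, fderiv ℝ w (x + r • radialDir θ) (radialDir θ)
  set A₂ : ℝ → ℝ := fun r => ∫ θ in Ioo (-π) π,
    fderiv ℝ (fderiv ℝ w) (x + r • radialDir θ) (radialDir θ) (radialDir θ)
  have hA : ∀ r, HasDerivAt (angularIntegral w x) (A₁ r) r :=
    hasDerivAt_angularIntegral (hw.of_le one_le_two) x
  have hB : ∀ r, HasDerivAt (fun r => r * A₁ r) (A₁ r + r * A₂ r) r := fun r => by
    simpa using (hasDerivAt_id' r).fun_mul (hasDerivAt_integral_fderiv_radialDir hw x r)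
  -- `r ↦ r A₁(r)` is monotone since `r (A₁ + r A₂) ≥ 0`, and it vanishes at `0`
  have hBmono : MonotoneOn (fun r => r * A₁ r) (Ici 0) := by
    refine monotoneOn_of_deriv_nonneg (convex_Ici 0)
      (HasDerivAt.continuousOn fun r _ => hB r)
      (fun r _ => (hB r).differentiableAt.differentiableWithinAt)
      fun r hr => ?_
    rw [interior_Ici] at hr
    rw [(hB r).deriv]
    have := sq_mul_integral_add_mul_integral_nonneg hw hlap x r
    have hr : 0 < r := hr
    nlinarith
  have hA₁ : ∀ r, 0 < r → 0 ≤ A₁ r := fun r hr => by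
    have := hBmono self_mem_Ici hr.le hr.le
    simp only [zero_mul] at this
    exact nonneg_of_mul_nonneg_right (by linarith) hr
  refine monotoneOn_of_deriv_nonneg (convex_Ici 0) (HasDerivAt.continuousOn fun r _ => hA r)
    (fun r _ => (hA r).differentiableAt.differentiableWithinAt) fun r hr => ?_
  rw [interior_Ici] at hr
  rw [(hA r).deriv]
  exact hA₁ r hr

lemma angularIntegral_zero (x : ℝ × ℝ) : angularIntegral w x 0 = 2 * π * w x := by
  simp only [angularIntegral, zero_smul, add_zero]
  exact integral_Ioo_neg_pi_pi_const _

theorem pi_mul_sq_mul_le_integral_disc (hw : ContDiff ℝ 2 w) (hlap : ∀ p, 0 ≤ lap w p) (x : ℝ × ℝ)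
    {L : ℝ} (hL : 0 ≤ L) : π * L ^ 2 * w x ≤ ∫ z in disc L, w (x + z) := by
  rw [integral_disc_eq_polar (h := fun z => w (x + z)) hL
    (hw.continuous.comp (continuous_const_add x))]
  have hAc : Continuous (angularIntegral w x) := continuous_iff_continuousAt.2 fun r =>
    (hasDerivAt_angularIntegral (hw.of_le one_le_two) x r).continuousAt
  have hint : ∀ {f : ℝ → ℝ}, Continuous f → IntegrableOn f (Ioo 0 L) := fun hf =>
    hf.integrableOn_of_isCompact_closure (Metric.isBounded_Ioo _ _).isCompact_closure
  calc π * L ^ 2 * w x = ∫ r in Ioo 0 L, r * (2 * π * w x) := by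
        rw [integral_Ioo_mul_const hL]; ring
    _ ≤ ∫ r in Ioo 0 L, r * angularIntegral w x r := by
        refine setIntegral_mono_on (hint (by fun_prop)) (hint (by fun_prop)) measurableSet_Ioo
          fun r hr => mul_le_mul_of_nonneg_left ?_ hr.1.le
        rw [← angularIntegral_zero]
        exact monotoneOn_angularIntegral hw hlap x self_mem_Ici hr.1.le hr.1.le
    _ = ∫ r in Ioo 0 L, r • ∫ θ in Ioo (-π) π, w (x + r • radialDir θ) := rfl

end SubmeanValue

section QuantitativeMaximumPrinciple

variable {w f : ℝ × ℝ → ℝ}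

lemma isCompact_sqQ (r : ℝ) (x : ℝ × ℝ) : IsCompact (sqQ r x) :=
  isCompact_Icc.prod isCompact_Icc

lemma mem_sqQ_self {r : ℝ} (hr : 0 ≤ r) (x : ℝ × ℝ) : x ∈ sqQ r x :=
  ⟨⟨by linarith, by linarith⟩, by linarith, by linarith⟩

lemma preimage_add_sqQ_subset_disc {L : ℝ} (hL : 0 < L) (p : ℝ × ℝ) :
    (p + ·) ⁻¹' sqQ L p ⊆ disc L := by
  intro z hz
  simp only [sqQ, mem_preimage, mem_prod, mem_Icc, Prod.fst_add, Prod.snd_add] at hz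
  show z.1 ^ 2 + z.2 ^ 2 < L ^ 2
  nlinarith

lemma add_mem_sqQ_of_mem_disc {L R : ℝ} (hL : 0 ≤ L) {x y z : ℝ × ℝ}
    (hy : y ∈ sqQ (R - 2 * L) x) (hz : z ∈ disc L) : y + z ∈ sqQ R x := by
  have hz := mem_ball_zero_iff.1 (disc_subset_ball L hz)
  rw [abs_of_nonneg hL, Prod.norm_def, max_lt_iff, Real.norm_eq_abs, Real.norm_eq_abs, abs_lt,
    abs_lt] at hz
  simp only [sqQ, mem_prod, mem_Icc, Prod.fst_add, Prod.snd_add] at hy ⊢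
  refine ⟨⟨?_, ?_⟩, ?_, ?_⟩ <;> linarith

lemma le_lap_translateIntegral_disc (hw : ContDiff ℝ 2 w) (hf : Measurable f)
    (hf0 : ∀ p, 0 ≤ f p) (hfw : ∀ p, f p ≤ lap w p) {L : ℝ} (hL : 0 < L) (p : ℝ × ℝ) :
    ∫ y in sqQ L p, f y ≤ lap (translateIntegral (disc L) w) p := by
  have hlapint := (continuous_lap hw).integrableOn_translate (isBounded_disc L) p
  have hfint : IntegrableOn (fun z => f (p + z)) (disc L) :=
    hlapint.mono' (hf.comp (measurable_const_add p)).aestronglyMeasurable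
      (.of_forall fun z => by rw [Real.norm_of_nonneg (hf0 _)]; exact hfw _)
  rw [lap_translateIntegral hw (measurableSet_disc L) (isBounded_disc L),
    ← (measurePreserving_add_left volume p).setIntegral_preimage_emb
      (measurableEmbedding_addLeft p)]
  calc ∫ z in (p + ·) ⁻¹' sqQ L p, f (p + z)
      ≤ ∫ z in disc L, f (p + z) :=
        setIntegral_mono_set hfint (.of_forall fun z => hf0 _)
          (preimage_add_sqQ_subset_disc hL p).eventuallyLE
    _ ≤ ∫ z in disc L, lap w (p + z) := integral_mono hfint hlapint fun z => hfw _

lemma translateIntegral_disc_le {g : ℝ × ℝ → ℝ} (hg : Continuous g) {L : ℝ} (hL : 0 ≤ L)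
    {y : ℝ × ℝ} {M : ℝ} (hM : ∀ z ∈ disc L, g (y + z) ≤ M) :
    translateIntegral (disc L) g y ≤ π * L ^ 2 * M := by
  calc translateIntegral (disc L) g y ≤ ∫ _ in disc L, M :=
        setIntegral_mono_on (hg.integrableOn_translate (isBounded_disc L) y)
          (integrableOn_const (isBounded_disc L).measure_lt_top.ne) (measurableSet_disc L) hM
    _ = π * L ^ 2 * M := by rw [setIntegral_const, volume_real_disc hL, smul_eq_mul]

theorem le_sSup_image_frontier_sqQ_sub (hw : ContDiff ℝ 2 w) (hf : Measurable f)
    (hf0 : ∀ p, 0 ≤ f p) (hfw : ∀ p, f p ≤ lap w p) {a L R : ℝ} (ha : 0 < a) (hL : 0 < L)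
    (hLR : 2 * L ≤ R) (havg : ∀ p, a * L ^ 2 ≤ ∫ y in sqQ L p, f y) (x : ℝ × ℝ) :
    w x ≤ sSup (w '' frontier (sqQ R x)) - a * (R - 2 * L) ^ 2 / (32 * π) := by
  set M := sSup (w '' frontier (sqQ R x))
  set U := translateIntegral (disc L) w
  set c := a * L ^ 2 / 8 with hc
  have hwlap : ∀ p, 0 ≤ lap w p := fun p => (hf0 p).trans (hfw p)
  have hU := hw.lapDifferentiable_translateIntegral (measurableSet_disc L) (isBounded_disc L)
  have hsq := (contDiff_sqDist x).lapDifferentiable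
  have hx : x ∈ sqQ (R - 2 * L) x := mem_sqQ_self (by linarith) x
  obtain ⟨y, hyfr, hymax⟩ := (isCompact_sqQ (R - 2 * L) x).exists_isMaxOn_mem_frontier ⟨x, hx⟩
    (hU.add_smul hsq (-c)) fun p _ => by
      have := (havg p).trans (le_lap_translateIntegral_disc hw hf hf0 hfw hL p)
      rw [hU.lap_add_smul hsq]
      simp only [Pi.add_apply, Pi.smul_apply, lap_sqDist, smul_eq_mul]
      nlinarith [mul_pos ha (pow_pos hL 2)]
  have hy : y ∈ sqQ (R - 2 * L) x := (isCompact_sqQ _ x).isClosed.frontier_subset hyfr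
  have hUx : π * L ^ 2 * w x ≤ U x := pi_mul_sq_mul_le_integral_disc hw hwlap x hL.le
  have hUy : U y ≤ π * L ^ 2 * M := translateIntegral_disc_le hw.continuous hL.le fun z hz =>
    (isCompact_sqQ R x).le_sSup_image_frontier hw.lapDifferentiable (fun p _ => hwlap p)
      (add_mem_sqQ_of_mem_disc hL.le hy hz)
  have hxy : U x + -c * sqDist x x ≤ U y + -c * sqDist x y := hymax hx
  have hdist := sq_le_sqDist_of_mem_frontier_sqQ (by linarith) hyfr
  rw [show sqDist x x = 0 by simp [sqDist], mul_zero, add_zero] at hxy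
  have hgain : π * L ^ 2 * (a * (R - 2 * L) ^ 2 / (32 * π)) = c * ((R - 2 * L) / 2) ^ 2 := by
    field_simp
    ring
  have key : π * L ^ 2 * w x ≤ π * L ^ 2 * (M - a * (R - 2 * L) ^ 2 / (32 * π)) := by
    rw [mul_sub, hgain]
    nlinarith [mul_le_mul_of_nonneg_left hdist (by positivity : 0 ≤ c)]
  exact le_of_mul_le_mul_left key (by positivity)

end QuantitativeMaximumPrinciple

lemma one_div_2304_mul_le {N : ℝ} (hN : 3 ≤ N) {s : ℝ} (hs : 0 ≤ s) (k : ℕ) :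
    1 / 2304 * s * N ^ (2 * k + 2) ≤ s / 2 * (N ^ (k + 1) - 2 * N ^ k) ^ 2 / (32 * π) := by
  have hNk : 0 ≤ N ^ k := by positivity
  rw [le_div_iff₀ (by positivity), show N ^ (2 * k + 2) = (N ^ k) ^ 2 * N ^ 2 by ring,
    show N ^ (k + 1) - 2 * N ^ k = N ^ k * (N - 2) by ring]
  have h9 : N ^ 2 ≤ 9 * (N - 2) ^ 2 := by nlinarith
  have hsN : 0 ≤ s * (N ^ k) ^ 2 := by positivity
  nlinarith [mul_le_mul_of_nonneg_left h9 hsN, pi_le_four, mul_nonneg hsN (sq_nonneg N)]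

theorem stmt12 :
    ∃ C : ℝ, 0 < C ∧ ∀ (N : ℕ), Odd N → 3 ≤ N → ∀ σ : ℝ,
      2 / (N : ℝ) ^ 2 < σ → σ < 1 → ∀ (k : ℕ) (w f : ℝ × ℝ → ℝ),
      ContDiff ℝ 2 w → (∀ p, 0 ≤ w p) → (∀ p, f p ≤ lap w p) →
      Measurable f → (∀ p, 0 ≤ f p ∧ f p ≤ 1) →
      (∀ x : ℝ × ℝ, ∀ i : ℕ, i ≤ k →
        σ ^ i / 2 ≤ (1 / (N : ℝ) ^ (2 * i)) * ∫ y in sqQ ((N : ℝ) ^ i) x, f y) →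
      ∀ x : ℝ × ℝ,
        w x ≤ sSup (w '' frontier (sqQ ((N : ℝ) ^ (k + 1)) x)) - C * σ ^ k * (N : ℝ) ^ (2 * k + 2) := by
  refine ⟨1 / 2304, by norm_num, fun N _ hN σ hσ _ k w f hw _ hfw hf hf01 havg x => ?_⟩
  have hN : (3 : ℝ) ≤ N := by exact_mod_cast hN
  have hσ : 0 < σ := lt_trans (by positivity) hσ
  have hNk : 0 < (N : ℝ) ^ k := by positivity
  have havg' : ∀ p, σ ^ k / 2 * ((N : ℝ) ^ k) ^ 2 ≤ ∫ y in sqQ ((N : ℝ) ^ k) p, f y := fun p => by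
    have h := havg p k le_rfl
    rwa [pow_mul', one_div_mul_eq_div, le_div_iff₀ (by positivity)] at h
  have hmain := le_sSup_image_frontier_sqQ_sub (R := (N : ℝ) ^ (k + 1)) hw hf
    (fun p => (hf01 p).1) hfw (by positivity) hNk (by rw [pow_succ]; nlinarith) havg' x
  linarith [one_div_2304_mul_le hN (pow_pos hσ k).le k]
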